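/- arXiv:1701.05817 — 2 statements merged into one kernel-verified Lean document; each statement's English description precedes it below -/
import Mathlib

section
/- Let M be a finitely generated free abelian group, A a finitely generated commutative M-graded algebra over a field k, and H a subgroup of M. Then the subalgebra A_H = ⊕_{u ∈ H} A_u is a finitely generated k-algebra. -/
/-!
Pick finitely many homogeneous generators `a i ∈ 𝒜 (d i)`. Every `x ∈ 𝒜 u` is a combination of
monomials `∏ a i ^ e i`, and projecting to degree `u` keeps only those of weight
`∑ e i • d i = u`; so `A_H` is spanned by the monomials whose exponent lies in
`E = {e | ∑ e i • d i ∈ H}`. Because `H` is a group, `E` is a subtractive submonoid of `ℕ^ι`,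
hence finitely generated by Dickson's lemma, and the monomials of its generators generate `A_H`.
-/

open DirectSum Finsupp

theorem AddSubmonoid.fg_comap_of_addSubgroup {ι G : Type*} [Finite ι] [AddGroup G]
    (φ : (ι →₀ ℕ) →+ G) (H : AddSubgroup G) : (H.toAddSubmonoid.comap φ).FG :=
  fg_of_subtractive fun x hx y hxy ↦ by
    rw [mem_comap, map_add] at hxy
    exact (H.add_mem_cancel_left hx).mp hxy

section Graded

variable {M R A : Type*} [AddCommMonoid M] [CommSemiring R]

theorem Algebra.FiniteType.exists_finset_adjoin_eq_top_and_homogeneous [DecidableEq M]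
    [Semiring A] [Algebra R A] [Algebra.FiniteType R A] (𝒜 : M → Submodule R A)
    [GradedAlgebra 𝒜] :
    ∃ s : Finset A, Algebra.adjoin R (s : Set A) = ⊤ ∧
      ∀ x ∈ s, SetLike.IsHomogeneousElem 𝒜 x := by
  classical
  obtain ⟨t, ht⟩ := Algebra.FiniteType.out (R := R) (A := A)
  let components (x : A) : Finset A := (decompose 𝒜 x).support.image fun u ↦ decompose 𝒜 x u
  refine ⟨t.biUnion components, ?_, ?_⟩
  · rw [← top_le_iff, ← ht, Algebra.adjoin_le_iff]
    intro x hx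
    rw [← sum_support_decompose 𝒜 x]
    exact sum_mem fun u hu ↦ Algebra.subset_adjoin <| by
      simpa [components] using ⟨x, hx, u, DFinsupp.mem_support_iff.mp hu, rfl⟩
  · simp only [Finset.mem_biUnion, Finset.mem_image, components]
    rintro _ ⟨x, -, u, -, rfl⟩
    exact ⟨u, (decompose 𝒜 x u).2⟩

section GradedSubalgebra

variable [Semiring A] [Algebra R A] (𝒜 : M → Submodule R A)

theorem iSup_mem_graded_mul_self_le [SetLike.GradedMonoid 𝒜] (H : AddSubmonoid M) :
    (⨆ u ∈ H, 𝒜 u) * (⨆ u ∈ H, 𝒜 u) ≤ ⨆ u ∈ H, 𝒜 u := by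
  simp only [Submodule.iSup_mul, Submodule.mul_iSup, iSup_le_iff]
  intro v hv u hu
  exact Submodule.mul_le.mpr fun x hx y hy ↦
    le_iSup₂ (f := fun w _ ↦ 𝒜 w) (u + v) (H.add_mem hu hv) (SetLike.mul_mem_graded hx hy)

def gradedSubalgebra [SetLike.GradedMonoid 𝒜] (H : AddSubmonoid M) : Subalgebra R A :=
  (⨆ u ∈ H, 𝒜 u).toSubalgebra
    (le_iSup₂ (f := fun u _ ↦ 𝒜 u) 0 H.zero_mem (SetLike.one_mem_graded 𝒜))
    fun _ _ hx hy ↦ iSup_mem_graded_mul_self_le 𝒜 H (Submodule.mul_mem_mul hx hy)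

theorem toSubmodule_gradedSubalgebra [SetLike.GradedMonoid 𝒜] (H : AddSubmonoid M) :
    Subalgebra.toSubmodule (gradedSubalgebra 𝒜 H) = ⨆ u ∈ H, 𝒜 u :=
  Submodule.toSubalgebra_toSubmodule _ _ _

end GradedSubalgebra

section Monomials

variable {ι : Type*} [CommSemiring A] [Algebra R A] (𝒜 : M → Submodule R A)
  {a : ι → A} {d : ι → M}

theorem prod_pow_mem_graded_weight [SetLike.GradedMonoid 𝒜] (ha : ∀ i, a i ∈ 𝒜 (d i))
    (e : ι →₀ ℕ) : e.prod (a · ^ ·) ∈ 𝒜 (weight d e) := by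
  rw [weight_apply, Finsupp.sum]
  exact SetLike.prod_pow_mem_graded 𝒜 d a e fun i _ ↦ ha i

theorem graded_le_span_prod_pow [DecidableEq M] [GradedAlgebra 𝒜] (ha : ∀ i, a i ∈ 𝒜 (d i))
    (hgen : Algebra.adjoin R (Set.range a) = ⊤) (u : M) :
    𝒜 u ≤ Submodule.span R ((fun e : ι →₀ ℕ ↦ e.prod (a · ^ ·)) '' {e | weight d e = u}) := by
  intro x hx
  have hx_span : x ∈ Submodule.span R (Submonoid.closure (Set.range a) : Set A) := by
    rw [← Algebra.adjoin_eq_span, hgen]; trivial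
  have hx_proj := Submodule.mem_map_of_mem (f := GradedAlgebra.proj 𝒜 u) hx_span
  rw [GradedAlgebra.proj_apply, decompose_of_mem_same 𝒜 hx, Submodule.map_span] at hx_proj
  refine Submodule.span_le.mpr ?_ hx_proj
  rintro _ ⟨_, hy, rfl⟩
  obtain ⟨e, rfl⟩ := Submonoid.mem_closure_range_iff.mp (SetLike.mem_coe.mp hy)
  have he := prod_pow_mem_graded_weight 𝒜 ha e
  rw [GradedAlgebra.proj_apply]
  by_cases hdeg : weight d e = u
  · subst hdeg
    rw [decompose_of_mem_same 𝒜 he]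
    exact Submodule.subset_span ⟨e, rfl, rfl⟩
  · rw [decompose_of_mem_ne 𝒜 he hdeg]
    exact zero_mem _

theorem gradedSubalgebra_eq_adjoin_prod_pow [DecidableEq M] [GradedAlgebra 𝒜]
    (ha : ∀ i, a i ∈ 𝒜 (d i)) (hgen : Algebra.adjoin R (Set.range a) = ⊤)
    {H : AddSubmonoid M} {G : Set (ι →₀ ℕ)} (hG : AddSubmonoid.closure G = H.comap (weight d)) :
    gradedSubalgebra 𝒜 H = Algebra.adjoin R ((fun e : ι →₀ ℕ ↦ e.prod (a · ^ ·)) '' G) := by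
  have hE : ∀ e ∈ H.comap (weight d), e.prod (a · ^ ·) ∈
      Algebra.adjoin R ((fun e : ι →₀ ℕ ↦ e.prod (a · ^ ·)) '' G) := by
    intro e he
    rw [← hG] at he
    induction he using AddSubmonoid.closure_induction with
    | mem e he => exact Algebra.subset_adjoin ⟨e, he, rfl⟩
    | zero => rw [prod_zero_index]; exact one_mem _
    | add e f _ _ he hf =>
      rw [prod_add_index' (h := (a · ^ ·)) (fun _ ↦ pow_zero _) (fun _ _ _ ↦ pow_add _ _ _)]
      exact mul_mem he hf
  apply le_antisymm
  · rw [← Subalgebra.toSubmodule.le_iff_le, toSubmodule_gradedSubalgebra]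
    refine iSup₂_le fun u hu ↦ (graded_le_span_prod_pow 𝒜 ha hgen u).trans ?_
    rw [Submodule.span_le]
    rintro _ ⟨e, rfl, rfl⟩
    exact hE e hu
  · rw [Algebra.adjoin_le_iff]
    rintro _ ⟨e, he, rfl⟩
    have he' : weight d e ∈ H := by
      rw [← AddSubmonoid.mem_comap, ← hG]
      exact AddSubmonoid.subset_closure he
    rw [SetLike.mem_coe, ← Subalgebra.mem_toSubmodule, toSubmodule_gradedSubalgebra]
    exact le_iSup₂ (f := fun u _ ↦ 𝒜 u) _ he' (prod_pow_mem_graded_weight 𝒜 ha e)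

end Monomials

end Graded

theorem graded_part_over_subgroup_finiteType_general
    (M : Type*) [AddCommGroup M]
    [DecidableEq M]
    (k : Type*) [Field k]
    (A : Type*) [CommRing A] [Algebra k A] [Algebra.FiniteType k A]
    (𝒜 : M → Submodule k A) [GradedAlgebra 𝒜]
    (H : AddSubgroup M) :
    ∃ S : Subalgebra k A,
      (Subalgebra.toSubmodule S = ⨆ u ∈ H, 𝒜 u) ∧ S.FG := by
  obtain ⟨s, hs, hhom⟩ := Algebra.FiniteType.exists_finset_adjoin_eq_top_and_homogeneous 𝒜
  choose d hd using fun x : s ↦ hhom x x.2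
  obtain ⟨G, hG⟩ := AddSubmonoid.fg_comap_of_addSubgroup (weight d) H
  refine ⟨gradedSubalgebra 𝒜 H.toAddSubmonoid, toSubmodule_gradedSubalgebra 𝒜 _, ?_⟩
  rw [gradedSubalgebra_eq_adjoin_prod_pow 𝒜 hd (by rwa [Subtype.range_coe]) hG]
  exact Subalgebra.fg_def.mpr ⟨_, G.finite_toSet.image _, rfl⟩

/-- Let `M` be a finitely generated free abelian group, `A` a finitely generated
commutative `M`-graded algebra over a field `k`, and `H ≤ M` a subgroup.  Then
the subalgebra `A_H = ⊕_{u ∈ H} A_u` is a finitely generated `k`-algebra. -/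
theorem graded_part_over_subgroup_finiteType
    (M : Type*) [AddCommGroup M] [Module.Free ℤ M] [Module.Finite ℤ M]
    [DecidableEq M]
    (k : Type*) [Field k]
    (A : Type*) [CommRing A] [Algebra k A] [Algebra.FiniteType k A]
    (𝒜 : M → Submodule k A) [GradedAlgebra 𝒜]
    (H : AddSubgroup M) :
    ∃ S : Subalgebra k A,
      (Subalgebra.toSubmodule S = ⨆ u ∈ H, 𝒜 u) ∧ S.FG :=
  graded_part_over_subgroup_finiteType_general M k A 𝒜 H
end

section
/- For the 𝔾ₘ²-action on ℂ[x,y,z,t,u] with weights wt(x)=(1,1), wt(y)=(2,2), wt(z)=(1,0), wt(t)=(−1,0), wt(u)=(4,2), the ring of invariants of the quotient ring A = ℂ[x,y,z,t,u]/(zty + x² + y + t²u) is the polynomial ring generated by the class of zt; in particular A^{𝔾ₘ²} ≅ ℂ[w] is a polynomial ring in one variable. -/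
/-!
The torus acts diagonally on monomials, `(λ₁, λ₂)` scaling a monomial of weight `m ∈ ℤ²` by
`λ₁ ^ m.1 * λ₂ ^ m.2`. The relation is weighted homogeneous, so the ideal it generates is graded,
and a class is invariant exactly when every nonzero-weight component of a representative lies in
the ideal: the class is that of the weight-zero component, and the weight-zero monomials are the
powers of `zt`. The class of `zt` is transcendental because the hypersurface contains the points
`(0, 0, s, 1, 0)`, where `zt` takes every value `s`.
-/

open MvPolynomial

/-- The `𝔾ₘ² = (ℂ*)²`-action on `ℂ[x,y,z,t,u]` with weights
`wt(x)=(1,1)`, `wt(y)=(2,2)`, `wt(z)=(1,0)`, `wt(t)=(−1,0)`, `wt(u)=(4,2)`: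
`(λ₁,λ₂)` acts by the `ℂ`-algebra map sending the variables (indexed `0,…,4`)
to their rescalings. -/
noncomputable def torusAct (l₁ l₂ : ℂˣ) :
    MvPolynomial (Fin 5) ℂ →ₐ[ℂ] MvPolynomial (Fin 5) ℂ :=
  aeval
    ![C ((l₁ : ℂ) * (l₂ : ℂ)) * X 0,
      C ((l₁ : ℂ) ^ 2 * (l₂ : ℂ) ^ 2) * X 1,
      C (l₁ : ℂ) * X 2,
      C ((l₁ : ℂ)⁻¹) * X 3,
      C ((l₁ : ℂ) ^ 4 * (l₂ : ℂ) ^ 2) * X 4]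

lemma AddChar.map_weight {R σ M : Type*} [CommMonoid R] [AddCommMonoid M] (ψ : AddChar M R)
    (w : σ → M) (d : σ →₀ ℕ) : ψ (Finsupp.weight w d) = d.prod fun i k => ψ (w i) ^ k := by
  have := map_prod ψ.toMonoidHom (fun i => Multiplicative.ofAdd (d i • w i)) d.support
  rw [← ofAdd_sum] at this
  rw [Finsupp.weight_apply, Finsupp.sum, Finsupp.prod]
  simpa only [ψ.toMonoidHom_apply, toAdd_ofAdd, ψ.map_nsmul_eq_pow] using this

namespace MvPolynomial

section WeightScaling

variable {R σ M : Type*} [CommSemiring R] [AddCommMonoid M]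

noncomputable def weightScaling (ψ : AddChar M R) (w : σ → M) :
    MvPolynomial σ R →ₐ[R] MvPolynomial σ R :=
  aeval fun i => C (ψ (w i)) * X i

variable (ψ : AddChar M R) (w : σ → M)

lemma weightScaling_monomial (d : σ →₀ ℕ) (a : R) :
    weightScaling ψ w (monomial d a) = monomial d (ψ (Finsupp.weight w d) * a) := by
  rw [weightScaling, aeval_monomial, monomial_eq, AddChar.map_weight, C_mul, algebraMap_eq]
  simp only [mul_pow, Finsupp.prod_mul, ← map_pow, ← map_finsuppProd]
  ring

lemma coeff_weightScaling (p : MvPolynomial σ R) (d : σ →₀ ℕ) :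
    coeff d (weightScaling ψ w p) = ψ (Finsupp.weight w d) * coeff d p := by
  classical
  induction p using MvPolynomial.induction_on' with
  | monomial e a =>
    rw [weightScaling_monomial, coeff_monomial, coeff_monomial]
    split_ifs with h
    · rw [h]
    · rw [mul_zero]
  | add p q hp hq => rw [map_add, coeff_add, coeff_add, hp, hq, mul_add]

lemma weightedHomogeneousComponent_weightScaling (p : MvPolynomial σ R) (m : M) :
    weightedHomogeneousComponent w m (weightScaling ψ w p) =
      ψ m • weightedHomogeneousComponent w m p := by
  classical
  ext d
  simp only [coeff_smul, coeff_weightedHomogeneousComponent, coeff_weightScaling, smul_eq_mul]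
  split_ifs with h
  · rw [h]
  · rw [mul_zero]

lemma IsWeightedHomogeneous.weightScaling_eq {p : MvPolynomial σ R} {m : M}
    (hp : IsWeightedHomogeneous w p m) : weightScaling ψ w p = ψ m • p := by
  ext d
  rw [coeff_weightScaling, coeff_smul, smul_eq_mul]
  by_cases hd : coeff d p = 0
  · rw [hd, mul_zero, mul_zero]
  · rw [hp hd]

end WeightScaling

section GradedIdeal

attribute [local instance] weightedGradedAlgebra

variable {σ M : Type*} [AddCommMonoid M] [DecidableEq M] {w : σ → M}

lemma IsWeightedHomogeneous.isHomogeneous_span_singleton {R : Type*} [CommSemiring R]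
    {f : MvPolynomial σ R} {m : M} (hf : IsWeightedHomogeneous w f m) :
    (Ideal.span {f}).IsHomogeneous (weightedHomogeneousSubmodule R w) :=
  Ideal.homogeneous_span _ _ fun _ hx => ⟨m, (Set.mem_singleton_iff.mp hx) ▸ hf⟩

lemma sub_weightedHomogeneousComponent_zero_mem {K ι : Type*} [Field K]
    {I : Ideal (MvPolynomial σ K)} (hI : I.IsHomogeneous (weightedHomogeneousSubmodule K w))
    (ψ : ι → AddChar M K) (hψ : ∀ m ≠ 0, ∃ i, ψ i m ≠ 1) {p : MvPolynomial σ K}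
    (hp : ∀ i, weightScaling (ψ i) w p - p ∈ I) :
    p - weightedHomogeneousComponent w 0 p ∈ I := by
  rw [mem_iff_weightedHomogeneousComponent_mem K w hI]
  intro m
  rw [map_sub, weightedHomogeneousComponent_of_mem (weightedHomogeneousComponent_mem w p 0)]
  split_ifs with hm
  · rw [hm, sub_self]
    exact I.zero_mem
  obtain ⟨i, hi⟩ := hψ m hm
  have hscaled : (ψ i m - 1) • weightedHomogeneousComponent w m p ∈ I := by
    simpa only [map_sub, weightedHomogeneousComponent_weightScaling, sub_smul, one_smul] using
      weightedHomogeneousComponent_mem_of_mem K w hI (hp i) m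
  rw [sub_zero]
  exact (Submodule.smul_mem_iff (I.restrictScalars K) (sub_ne_zero.mpr hi)).mp hscaled

end GradedIdeal

end MvPolynomial

lemma transcendental_of_forall_exists_algHom_eq {R A : Type*} [CommRing R] [IsDomain R]
    [Infinite R] [CommRing A] [Algebra R A] {x : A} (h : ∀ s : R, ∃ φ : A →ₐ[R] R, φ x = s) :
    Transcendental R x := by
  rw [transcendental_iff_injective, injective_iff_map_eq_zero]
  intro P hP
  refine Polynomial.funext fun s => ?_
  obtain ⟨φ, hφ⟩ := h s
  simpa [← Polynomial.aeval_algHom_apply, hφ] using congrArg φ hP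

noncomputable section

namespace TorusInvariants

def wt : Fin 5 → ℤ × ℤ := ![(1, 1), (2, 2), (1, 0), (-1, 0), (4, 2)]

def rel : MvPolynomial (Fin 5) ℂ := X 2 * X 3 * X 1 + X 0 ^ 2 + X 1 + X 3 ^ 2 * X 4

def torusChar (l₁ l₂ : ℂˣ) : AddChar (ℤ × ℤ) ℂ where
  toFun m := (l₁ : ℂ) ^ m.1 * (l₂ : ℂ) ^ m.2
  map_zero_eq_one' := by simp
  map_add_eq_mul' a b := by
    simp only [Prod.fst_add, Prod.snd_add, zpow_add₀ l₁.ne_zero, zpow_add₀ l₂.ne_zero]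
    ring

lemma torusAct_eq_weightScaling (l₁ l₂ : ℂˣ) :
    torusAct l₁ l₂ = weightScaling (torusChar l₁ l₂) wt := by
  refine algHom_ext fun i => ?_
  fin_cases i <;> simp [torusAct, weightScaling, torusChar, wt]

lemma isWeightedHomogeneous_rel : IsWeightedHomogeneous wt rel (2, 2) := by
  have hX (i : Fin 5) : IsWeightedHomogeneous wt (X i : MvPolynomial (Fin 5) ℂ) (wt i) :=
    isWeightedHomogeneous_X ℂ wt i
  have hdeg {p : MvPolynomial (Fin 5) ℂ} {m m' : ℤ × ℤ} (hp : IsWeightedHomogeneous wt p m)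
      (h : m = m') : IsWeightedHomogeneous wt p m' := h ▸ hp
  refine (((hdeg (((hX 2).mul (hX 3)).mul (hX 1)) ?_).add (hdeg ((hX 0).pow 2) ?_)).add
    (hdeg (hX 1) ?_)).add (hdeg (((hX 3).pow 2).mul (hX 4)) ?_) <;> simp [wt]

lemma isWeightedHomogeneous_zt :
    IsWeightedHomogeneous wt (X 2 * X 3 : MvPolynomial (Fin 5) ℂ) 0 := by
  convert (isWeightedHomogeneous_X ℂ wt 2).mul (isWeightedHomogeneous_X ℂ wt 3)
  simp [wt, Prod.ext_iff]

lemma monomial_of_weight_eq_zero {d : Fin 5 →₀ ℕ} (hd : Finsupp.weight wt d = 0) (c : ℂ) :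
    monomial d c = C c * (X 2 * X 3) ^ d 2 := by
  rw [Finsupp.weight_apply, Finsupp.sum_fintype _ _ (fun i => zero_smul ℕ (wt i))] at hd
  simp only [wt, Int.reduceNeg, nsmul_eq_mul, Fin.sum_univ_five, Fin.isValue,
    Matrix.cons_val_zero, Matrix.cons_val_one, Matrix.cons_val, Prod.ext_iff, Prod.fst_add,
    Prod.fst_mul, Prod.fst_natCast, mul_one, mul_neg, Prod.fst_zero, Prod.snd_add, Prod.snd_mul,
    Prod.snd_natCast, mul_zero, add_zero, Prod.snd_zero] at hd
  obtain ⟨h0, h1, h3, h4⟩ : d 0 = 0 ∧ d 1 = 0 ∧ d 3 = d 2 ∧ d 4 = 0 := by omega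
  rw [monomial_eq, Finsupp.prod_fintype _ _ fun _ => pow_zero _, Fin.prod_univ_five, h0, h1, h3, h4]
  ring

lemma weightedHomogeneousComponent_zero_mem_adjoin (p : MvPolynomial (Fin 5) ℂ) :
    weightedHomogeneousComponent wt 0 p ∈ Algebra.adjoin ℂ {X 2 * X 3} := by
  classical
  rw [weightedHomogeneousComponent_apply]
  refine Subalgebra.sum_mem _ fun d hd => ?_
  rw [monomial_of_weight_eq_zero (Finset.mem_filter.mp hd).2]
  exact Subalgebra.mul_mem _ (Subalgebra.algebraMap_mem _ _)
    (Subalgebra.pow_mem _ (Algebra.self_mem_adjoin_singleton ℂ _) _)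

lemma two_zpow_ne_one {n : ℤ} (hn : n ≠ 0) : (2 : ℂ) ^ n ≠ 1 := by
  rw [← Complex.ofReal_ofNat, ← Complex.ofReal_zpow, Ne, Complex.ofReal_eq_one,
    zpow_eq_one_iff_right₀ zero_le_two (by norm_num)]
  exact hn

lemma exists_torusChar_ne_one {m : ℤ × ℤ} (hm : m ≠ 0) :
    ∃ l : ℂˣ × ℂˣ, torusChar l.1 l.2 m ≠ 1 := by
  let two : ℂˣ := Units.mk0 2 two_ne_zero
  by_cases h₁ : m.1 = 0
  · have h₂ : m.2 ≠ 0 := fun h₂ => hm (Prod.ext h₁ h₂)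
    exact ⟨(1, two), by simpa [torusChar, two, h₁] using two_zpow_ne_one h₂⟩
  · exact ⟨(two, 1), by simpa [torusChar, two] using two_zpow_ne_one h₁⟩

lemma span_rel_le_comap_torusAct (l₁ l₂ : ℂˣ) :
    Ideal.span {rel} ≤ (Ideal.span {rel}).comap (torusAct l₁ l₂) := by
  rw [Ideal.span_le, Set.singleton_subset_iff, SetLike.mem_coe, Ideal.mem_comap,
    torusAct_eq_weightScaling, isWeightedHomogeneous_rel.weightScaling_eq, smul_eq_C_mul]
  exact Ideal.mul_mem_left _ _ (Ideal.mem_span_singleton_self _)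

def quotientTorusAct (l₁ l₂ : ℂˣ) :
    MvPolynomial (Fin 5) ℂ ⧸ Ideal.span {rel} →ₐ[ℂ] MvPolynomial (Fin 5) ℂ ⧸ Ideal.span {rel} :=
  Ideal.quotientMapₐ _ (torusAct l₁ l₂) (span_rel_le_comap_torusAct l₁ l₂)

lemma quotientTorusAct_eq_self_of_mem_adjoin (l₁ l₂ : ℂˣ)
    {a : MvPolynomial (Fin 5) ℂ ⧸ Ideal.span {rel}}
    (ha : a ∈ Algebra.adjoin ℂ {Ideal.Quotient.mkₐ ℂ (Ideal.span {rel}) (X 2 * X 3)}) :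
    quotientTorusAct l₁ l₂ a = a := by
  refine AlgHom.adjoin_le_equalizer (quotientTorusAct l₁ l₂) (AlgHom.id ℂ _) ?_ ha
  rintro _ rfl
  rw [AlgHom.id_apply, quotientTorusAct, Ideal.Quotient.mkₐ_eq_mk, Ideal.quotient_map_mkₐ,
    torusAct_eq_weightScaling, isWeightedHomogeneous_zt.weightScaling_eq, AddChar.map_zero_eq_one,
    one_smul, Ideal.Quotient.mkₐ_eq_mk]

lemma transcendental_mk_zt :
    Transcendental ℂ (Ideal.Quotient.mkₐ ℂ (Ideal.span {rel}) (X 2 * X 3)) := by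
  refine transcendental_of_forall_exists_algHom_eq fun s =>
    ⟨Ideal.Quotient.liftₐ _ (aeval ![0, 0, s, 1, 0]) fun q hq => ?_, by simp⟩
  obtain ⟨g, rfl⟩ := Ideal.mem_span_singleton'.mp hq
  simp [rel]

end TorusInvariants

end

open TorusInvariants

/-- For the `𝔾ₘ²`-action above on `A = ℂ[x,y,z,t,u]/(zty + x² + y + t²u)`,
the ring of invariants is the polynomial ring generated by the class `w` of
`zt`: an element of `A` is invariant if and only if it lies in the subalgebra
generated by `w`, and this subalgebra is `ℂ`-isomorphic to a polynomial ring
in one variable. -/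
theorem invariant_ring_is_polynomial_ring :
    ∀ I : Ideal (MvPolynomial (Fin 5) ℂ),
      I = Ideal.span {X 2 * X 3 * X 1 + X 0 ^ 2 + X 1 + X 3 ^ 2 * X 4} →
      (∀ a : MvPolynomial (Fin 5) ℂ ⧸ I,
        (∀ (l₁ l₂ : ℂˣ) (p : MvPolynomial (Fin 5) ℂ),
            Ideal.Quotient.mkₐ ℂ I p = a →
            Ideal.Quotient.mkₐ ℂ I (torusAct l₁ l₂ p) = a) ↔
          a ∈ Algebra.adjoin ℂ {Ideal.Quotient.mkₐ ℂ I (X 2 * X 3)}) ∧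
      Nonempty
        ((Algebra.adjoin ℂ
            ({Ideal.Quotient.mkₐ ℂ I (X 2 * X 3)} :
              Set (MvPolynomial (Fin 5) ℂ ⧸ I))) ≃ₐ[ℂ] Polynomial ℂ) := by
  intro I hI
  replace hI : I = Ideal.span {rel} := hI
  subst hI
  refine ⟨fun a => ⟨fun hinv => ?_, fun ha l₁ l₂ p hp => ?_⟩,
    ⟨(Polynomial.algEquivOfTranscendental ℂ _ transcendental_mk_zt).symm⟩⟩
  · obtain ⟨p, rfl⟩ := Ideal.Quotient.mkₐ_surjective ℂ _ a
    have hp₀ : p - weightedHomogeneousComponent wt 0 p ∈ Ideal.span {rel} :=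
      sub_weightedHomogeneousComponent_zero_mem
        isWeightedHomogeneous_rel.isHomogeneous_span_singleton
        (fun l : ℂˣ × ℂˣ => torusChar l.1 l.2) (fun _ => exists_torusChar_ne_one) fun l => by
          rw [← torusAct_eq_weightScaling, ← Ideal.Quotient.eq, ← Ideal.Quotient.mkₐ_eq_mk ℂ]
          exact hinv l.1 l.2 p rfl
    rw [Ideal.Quotient.mkₐ_eq_mk, Ideal.Quotient.eq.mpr hp₀, ← Ideal.Quotient.mkₐ_eq_mk ℂ,
      ← AlgHom.map_adjoin_singleton]
    exact Subalgebra.mem_map.mpr ⟨_, weightedHomogeneousComponent_zero_mem_adjoin p, rfl⟩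
  · subst hp
    exact quotientTorusAct_eq_self_of_mem_adjoin l₁ l₂ ha
end
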